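/- arXiv:1610.09651 — 3 statements merged into one kernel-verified Lean document; each statement's English description precedes it below -/
import Mathlib

section
/- Let T : ℝⁿ → ℝⁿ be a one-player Shapley operator admitting an invariant half-line with direction χ, i.e., there are v, χ ∈ ℝⁿ and α₀ ∈ ℝ with T(v + αχ) = v + (α+1)χ for all α ≥ α₀ (this hypothesis holds automatically by Kohlberg's theorem). Then max_{1≤i≤n} χ_i = max { ⟨m, r^τ⟩ : τ a deterministic policy, m ∈ M(P^τ) }. -/
/-!
For every policy `τ` we have `r^τ + P^τ x ≤ T x`; at `w = v + α₀ χ` this reads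
`r^τ + P^τ w ≤ w + χ`, and pairing with an invariant probability `m` of `P^τ` cancels `w`,
so `⟨m, r^τ⟩ ≤ ⟨m, χ⟩ ≤ max χ`.

Conversely, each coordinate of `α ↦ T (v + α χ)` is a maximum of finitely many affine functions
equal to an affine function on a half-line, so one of the pieces coincides with it. This yields a
policy `τ` with `P^τ χ = χ` and `r^τ + P^τ v = v + χ`. Since `P^τ` is stochastic, the set where `χ`
is maximal is closed under `P^τ` and therefore carries an invariant probability `m`, for which
`⟨m, r^τ⟩ = ⟨m, χ⟩ = max χ`.
-/

/-- One-player Shapley operator `T_i(x) = max_{b ∈ B i} ( r i b + ⟨P i b, x⟩ )`. -/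
noncomputable def onePlayerOp {n : ℕ} (B : Fin n → Type) [∀ i, Fintype (B i)]
    [∀ i, Nonempty (B i)] (r : ∀ i, B i → ℝ) (P : ∀ i, B i → Fin n → ℝ) :
    (Fin n → ℝ) → (Fin n → ℝ) :=
  fun x i => ⨆ b : B i, (r i b + ∑ j, P i b j * x j)

/-- `m` is an invariant probability vector of the stochastic matrix `Q` (rows `Q i`). -/
def isInvProb {n : ℕ} (Q : Fin n → Fin n → ℝ) (m : Fin n → ℝ) : Prop :=
  (∀ i, 0 ≤ m i) ∧ (∑ i, m i) = 1 ∧ ∀ j, ∑ i, m i * Q i j = m j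

open Finset

namespace Matrix

variable {ι : Type*} [Fintype ι] {M : Matrix ι ι ℝ}

theorem dotProduct_le_iSup {μ : ι → ℝ} (h0 : 0 ≤ μ) (h1 : ∑ i, μ i = 1) (χ : ι → ℝ) :
    μ ⬝ᵥ χ ≤ ⨆ i, χ i :=
  calc μ ⬝ᵥ χ ≤ μ ⬝ᵥ fun _ => ⨆ i, χ i :=
        dotProduct_le_dotProduct_of_nonneg_left (le_ciSup (Finite.bddAbove_range χ)) h0
    _ = ⨆ i, χ i := by rw [dotProduct, ← sum_mul, h1, one_mul]

theorem dotProduct_le_of_add_mulVec_le {μ r w χ : ι → ℝ} (h0 : 0 ≤ μ) (hμ : μ ᵥ* M = μ)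
    (h : r + M *ᵥ w ≤ w + χ) : μ ⬝ᵥ r ≤ μ ⬝ᵥ χ := by
  have := dotProduct_le_dotProduct_of_nonneg_left h h0
  rwa [dotProduct_add, dotProduct_add, dotProduct_mulVec, hμ, add_comm, add_le_add_iff_left]
    at this

theorem dotProduct_eq_of_add_mulVec_eq {μ r w χ : ι → ℝ} (hμ : μ ᵥ* M = μ)
    (h : r + M *ᵥ w = w + χ) : μ ⬝ᵥ r = μ ⬝ᵥ χ := by
  have := congrArg (μ ⬝ᵥ ·) h
  rwa [dotProduct_add, dotProduct_add, dotProduct_mulVec, hμ, add_comm, add_right_inj] at this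

variable [DecidableEq ι]

theorem exists_ne_zero_vecMul_eq_self_of_mem_rowStochastic [Nonempty ι]
    (hM : M ∈ rowStochastic ℝ ι) : ∃ u ≠ 0, u ᵥ* M = u := by
  have hdet : (M - 1).det = 0 := by
    refine exists_mulVec_eq_zero_iff.mp ⟨1, one_ne_zero, ?_⟩
    rw [sub_mulVec, one_mulVec, one_vecMul_of_mem_rowStochastic hM, sub_self]
  obtain ⟨u, hu, hu'⟩ := exists_vecMul_eq_zero_iff.mpr hdet
  exact ⟨u, hu, by rwa [vecMul_sub, vecMul_one, sub_eq_zero] at hu'⟩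

theorem sum_vecMul_of_mem_rowStochastic (hM : M ∈ rowStochastic ℝ ι) (x : ι → ℝ) :
    ∑ j, (x ᵥ* M) j = ∑ i, x i := by
  rw [← dotProduct_one, ← dotProduct_one, ← dotProduct_mulVec,
    one_vecMul_of_mem_rowStochastic hM]

theorem abs_vecMul_eq_self_of_mem_rowStochastic (hM : M ∈ rowStochastic ℝ ι) {u : ι → ℝ}
    (hu : u ᵥ* M = u) : |u| ᵥ* M = |u| := by
  have hle : |u| ≤ |u| ᵥ* M := fun j => calc
    |u j| = |∑ i, u i * M i j| := by rw [← congrFun hu j]; rfl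
    _ ≤ ∑ i, |u i * M i j| := abs_sum_le_sum_abs _ _
    _ = (|u| ᵥ* M) j := by
      simp [vecMul, dotProduct, abs_mul, abs_of_nonneg (nonneg_of_mem_rowStochastic hM)]
  have hsum := (sum_vecMul_of_mem_rowStochastic hM |u|).symm
  exact funext fun j => ((sum_eq_sum_iff_of_le fun i _ => hle i).mp hsum j (mem_univ j)).symm

theorem exists_stationary_of_mem_rowStochastic [Nonempty ι] (hM : M ∈ rowStochastic ℝ ι) :
    ∃ μ : ι → ℝ, 0 ≤ μ ∧ ∑ i, μ i = 1 ∧ μ ᵥ* M = μ := by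
  obtain ⟨u, hu0, hu⟩ := exists_ne_zero_vecMul_eq_self_of_mem_rowStochastic hM
  have hpos : 0 < ∑ i, |u i| := by
    obtain ⟨i, hi⟩ := Function.ne_iff.mp hu0
    exact sum_pos' (fun i _ => abs_nonneg _) ⟨i, mem_univ i, abs_pos.mpr hi⟩
  refine ⟨(∑ i, |u i|)⁻¹ • |u|, smul_nonneg (inv_nonneg.mpr hpos.le) (abs_nonneg u), ?_, ?_⟩
  · simp [← mul_sum, inv_mul_cancel₀ hpos.ne']
  · rw [smul_vecMul, abs_vecMul_eq_self_of_mem_rowStochastic hM hu]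

theorem exists_stationary_supported_on_closed {S : Set ι} (hM : M ∈ rowStochastic ℝ ι)
    (hS : S.Nonempty) (hclosed : ∀ i ∈ S, ∀ j ∉ S, M i j = 0) :
    ∃ μ : ι → ℝ, 0 ≤ μ ∧ ∑ i, μ i = 1 ∧ μ ᵥ* M = μ ∧ ∀ i ∉ S, μ i = 0 := by
  classical
  obtain ⟨i₀, hi₀⟩ := hS
  have : Nonempty ι := ⟨i₀⟩
  -- Replacing the rows outside `S` by the row of `i₀` makes every column outside `S` vanish.
  set f : ι → ι := fun i => if i ∈ S then i else i₀
  have hfS : ∀ i, f i ∈ S := fun i => by by_cases hi : i ∈ S <;> simp [f, hi, hi₀]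
  have hQ : M.submatrix f id ∈ rowStochastic ℝ ι := by
    rw [mem_rowStochastic_iff_sum] at hM ⊢
    exact ⟨fun i j => hM.1 _ _, fun i => hM.2 _⟩
  obtain ⟨μ, h0, h1, hinv⟩ := exists_stationary_of_mem_rowStochastic hQ
  have hsupp : ∀ j ∉ S, μ j = 0 := fun j hj => by
    rw [← hinv]
    simp [vecMul, dotProduct, hclosed _ (hfS _) j hj]
  refine ⟨μ, h0, h1, ?_, hsupp⟩
  conv_rhs => rw [← hinv]
  ext j
  refine sum_congr rfl fun i _ => ?_
  by_cases hi : i ∈ S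
  · simp [f, hi]
  · simp [hsupp i hi]

theorem apply_eq_zero_of_mulVec_eq_self_of_lt_max (hM : M ∈ rowStochastic ℝ ι) {χ : ι → ℝ}
    (hχ : M *ᵥ χ = χ) {i j : ι} (hi : ∀ k, χ k ≤ χ i) (hj : χ j < χ i) : M i j = 0 := by
  have hsum : ∑ k, M i k * (χ i - χ k) = 0 :=
    calc ∑ k, M i k * (χ i - χ k) = χ i - (M *ᵥ χ) i := by
          simp [mul_sub, ← sum_mul, sum_row_of_mem_rowStochastic hM, mulVec, dotProduct]
      _ = 0 := by rw [hχ, sub_self]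
  have := (sum_eq_zero_iff_of_nonneg fun k _ =>
    mul_nonneg (nonneg_of_mem_rowStochastic hM) (sub_nonneg.mpr (hi k))).mp hsum j (mem_univ j)
  exact (mul_eq_zero.mp this).resolve_right (sub_ne_zero.mpr hj.ne')

theorem exists_stationary_dotProduct_eq_iSup [Nonempty ι] (hM : M ∈ rowStochastic ℝ ι)
    {χ : ι → ℝ} (hχ : M *ᵥ χ = χ) :
    ∃ μ : ι → ℝ, 0 ≤ μ ∧ ∑ i, μ i = 1 ∧ μ ᵥ* M = μ ∧ μ ⬝ᵥ χ = ⨆ i, χ i := by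
  obtain ⟨i₀, hi₀⟩ := exists_eq_ciSup_of_finite (f := χ)
  have hmax : ∀ k, χ k ≤ χ i₀ := hi₀ ▸ le_ciSup (Finite.bddAbove_range χ)
  obtain ⟨μ, h0, h1, hinv, hsupp⟩ :=
    exists_stationary_supported_on_closed (S := {i | χ i = χ i₀}) hM ⟨i₀, rfl⟩ fun i hi j hj =>
      apply_eq_zero_of_mulVec_eq_self_of_lt_max hM hχ (hi ▸ hmax) (hi ▸ (hmax j).lt_of_ne hj)
  refine ⟨μ, h0, h1, hinv, ?_⟩
  calc μ ⬝ᵥ χ = ∑ i, μ i * χ i₀ := sum_congr rfl fun i _ => by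
        by_cases hi : χ i = χ i₀
        · rw [hi]
        · rw [hsupp i hi, zero_mul, zero_mul]
    _ = ⨆ i, χ i := by rw [← sum_mul, h1, one_mul, hi₀]

end Matrix

theorem exists_eq_of_ciSup_affine_eq {β : Type*} [Finite β] [Nonempty β] {a b : β → ℝ}
    {c d α₀ : ℝ} (h : ∀ α ≥ α₀, ⨆ k, (a k + α * b k) = c + α * d) :
    ∃ k, a k = c ∧ b k = d := by
  -- Some piece is maximal at infinitely many of the points `α₀ + N`, so at two distinct ones.
  have hmax : ∀ N : ℕ, ∃ k, a k + (α₀ + N) * b k = c + (α₀ + N) * d := fun N => by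
    obtain ⟨k, hk⟩ := exists_eq_ciSup_of_finite (f := fun k => a k + (α₀ + N) * b k)
    exact ⟨k, hk.trans (h _ (le_add_of_nonneg_right N.cast_nonneg))⟩
  choose g hg using hmax
  obtain ⟨N, N', hNN', hgN⟩ := Finite.exists_ne_map_eq_of_infinite g
  have hN := hg N
  have hN' := hg N'
  rw [← hgN] at hN'
  have hbd : b (g N) = d := by
    have : ((N : ℝ) - N') * (b (g N) - d) = 0 := by linear_combination hN - hN'
    exact sub_eq_zero.mp ((mul_eq_zero.mp this).resolve_left
      (sub_ne_zero.mpr (Nat.cast_injective.ne hNN')))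
  exact ⟨g N, by linear_combination hN - (α₀ + N) * hbd, hbd⟩

open Matrix

section Policy

variable {ι : Type*} {B : ι → Type*} (r : ∀ i, B i → ℝ) (P : ∀ i, B i → ι → ℝ)

def policyMatrix (τ : ∀ i, B i) : Matrix ι ι ℝ := of fun i => P i (τ i)

def policyReward (τ : ∀ i, B i) : ι → ℝ := fun i => r i (τ i)

theorem policyMatrix_mem_rowStochastic [Fintype ι] [DecidableEq ι]
    (hP : ∀ i b, (∀ j, 0 ≤ P i b j) ∧ ∑ j, P i b j = 1) (τ : ∀ i, B i) :
    policyMatrix P τ ∈ rowStochastic ℝ ι :=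
  mem_rowStochastic_iff_sum.mpr ⟨fun i j => (hP i (τ i)).1 j, fun i => (hP i (τ i)).2⟩

end Policy

section OnePlayer

variable {n : ℕ} {B : Fin n → Type} [∀ i, Fintype (B i)] [∀ i, Nonempty (B i)]
  (r : ∀ i, B i → ℝ) (P : ∀ i, B i → Fin n → ℝ)

theorem isInvProb_iff {Q : Fin n → Fin n → ℝ} {m : Fin n → ℝ} :
    isInvProb Q m ↔ 0 ≤ m ∧ ∑ i, m i = 1 ∧ m ᵥ* Q = m := by
  simp only [isInvProb, Pi.le_def, Pi.zero_apply, funext_iff, vecMul, dotProduct]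

theorem policyReward_add_policyMatrix_mulVec_le (τ : ∀ i, B i) (x : Fin n → ℝ) :
    policyReward r τ + policyMatrix P τ *ᵥ x ≤ onePlayerOp B r P x := fun i =>
  le_ciSup (f := fun b => r i b + ∑ j, P i b j * x j) (Finite.bddAbove_range _) (τ i)

theorem exists_policy_of_halfLine {v χ : Fin n → ℝ} {α₀ : ℝ}
    (hhalf : ∀ α ≥ α₀, onePlayerOp B r P (v + α • χ) = v + (α + 1) • χ) :
    ∃ τ : ∀ i, B i,
      policyMatrix P τ *ᵥ χ = χ ∧ policyReward r τ + policyMatrix P τ *ᵥ v = v + χ := by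
  have hline : ∀ i, ∀ α ≥ α₀,
      ⨆ b, ((r i b + P i b ⬝ᵥ v) + α * P i b ⬝ᵥ χ) = (v i + χ i) + α * χ i := fun i α hα => by
    rw [show v i + χ i + α * χ i = (v + (α + 1) • χ) i by simp; ring, ← hhalf α hα]
    refine iSup_congr fun b => ?_
    simp only [dotProduct, Pi.add_apply, Pi.smul_apply, smul_eq_mul, mul_add, sum_add_distrib,
      mul_sum]
    ring_nf
  choose τ hτr hτχ using fun i => exists_eq_of_ciSup_affine_eq (hline i)
  refine ⟨τ, funext hτχ, funext fun i => ?_⟩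
  simp only [Pi.add_apply, policyReward, policyMatrix, mulVec, of_apply]
  linarith [hτr i]

end OnePlayer

/-- for a one-player Shapley operator with an invariant half-line of
direction `χ`, `max_i χ_i = max { ⟨m, r^τ⟩ : τ deterministic policy, m ∈ M(P^τ) }`. -/
theorem stmt5 {n : ℕ} (hn : 0 < n)
    (B : Fin n → Type) [∀ i, Fintype (B i)] [∀ i, Nonempty (B i)]
    (r : ∀ i, B i → ℝ) (P : ∀ i, B i → Fin n → ℝ)
    (hP : ∀ i b, (∀ j, 0 ≤ P i b j) ∧ ∑ j, P i b j = 1)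
    (T : (Fin n → ℝ) → (Fin n → ℝ)) (hT : T = onePlayerOp B r P)
    (v χ : Fin n → ℝ) (α₀ : ℝ)
    (hhalf : ∀ α ≥ α₀, T (v + α • χ) = v + (α + 1) • χ) :
    (⨆ i, χ i) = sSup {val : ℝ | ∃ (τ : ∀ i, B i) (m : Fin n → ℝ),
      isInvProb (fun i j => P i (τ i) j) m ∧ val = ∑ i, m i * r i (τ i)} := by
  subst hT
  have : Nonempty (Fin n) := ⟨⟨0, hn⟩⟩
  refine (IsGreatest.csSup_eq ⟨?_, ?_⟩).symm
  · obtain ⟨τ, hτχ, hτv⟩ := exists_policy_of_halfLine r P hhalf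
    obtain ⟨μ, h0, h1, hinv, hμχ⟩ :=
      exists_stationary_dotProduct_eq_iSup (policyMatrix_mem_rowStochastic P hP τ) hτχ
    exact ⟨τ, μ, isInvProb_iff.mpr ⟨h0, h1, hinv⟩,
      hμχ.symm.trans (dotProduct_eq_of_add_mulVec_eq hinv hτv).symm⟩
  · rintro _ ⟨τ, μ, hμ, rfl⟩
    obtain ⟨h0, h1, hinv⟩ := isInvProb_iff.mp hμ
    have hle := policyReward_add_policyMatrix_mulVec_le r P τ (v + α₀ • χ)
    rw [hhalf α₀ le_rfl, add_smul, one_smul, ← add_assoc] at hle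
    exact (dotProduct_le_of_add_mulVec_le h0 hinv hle).trans (dotProduct_le_iSup h0 h1 χ)
end

section
/- Let T : ℝⁿ → ℝⁿ be monotone and additively homogeneous, let λ ∈ ℝ, and suppose the eigenspace E(T) = { x ∈ ℝⁿ : T(x) = λe + x } is nonempty and is contained in a finite union of lines with direction e, i.e., there exist v¹,…,v^N ∈ ℝⁿ with E(T) ⊆ ⋃_{k=1}^N { v^k + te : t ∈ ℝ }. Then E(T) is exactly one such line: there exists u ∈ ℝⁿ with E(T) = { u + te : t ∈ ℝ }; in other words, the eigenvector of T is unique up to an additive constant. -/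
/-!
A monotone additively homogeneous map is 1-Lipschitz for the sup norm. If `x` and `y` are fixed
points and `d = dist x y`, then `x ⊔ (y + s e)` lies between its image and the fixed point
`y + (max s d) e`, so its iterates increase to a fixed point `w s`; the map `s ↦ w s` is
1-Lipschitz, with `w (-d) = x` and `w d = y + d e`. Its image in the quotient of `ℝⁿ` by `ℝ e`
is therefore connected, and when the fixed points meet only finitely many lines of direction `e`
it is also finite, hence a single point.
-/

open Filter Topology Function Set

structure IsTopical {ι : Type*} (F : (ι → ℝ) → ι → ℝ) : Prop where
  monotone : Monotone F
  map_add_const : ∀ x c, F (x + fun _ => c) = F x + fun _ => c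

theorem Monotone.tendsto_iterate_ciSup {α : Type*} [ConditionallyCompleteLattice α]
    [TopologicalSpace α] [SupConvergenceClass α] {F : α → α} (hF : Monotone F) {z u : α}
    (hz : z ≤ F z) (hzu : z ≤ u) (hu : IsFixedPt F u) :
    Tendsto (fun k => F^[k] z) atTop (𝓝 (⨆ k, F^[k] z)) :=
  tendsto_atTop_ciSup (hF.monotone_iterate_of_le_map hz)
    ⟨u, by rintro _ ⟨k, rfl⟩; exact (hF.iterate k hzu).trans_eq (hu.iterate k)⟩

section FiniteDimension

variable {ι : Type*} [Fintype ι]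

theorem le_add_const_dist (x y : ι → ℝ) : x ≤ y + fun _ => dist x y := fun i => by
  have : x i - y i ≤ dist x y := (le_abs_self _).trans (dist_le_pi_dist x y i)
  simp only [Pi.add_apply]
  linarith

theorem dist_sup_sup_le (x a b : ι → ℝ) : dist (x ⊔ a) (x ⊔ b) ≤ dist a b :=
  (dist_pi_le_iff dist_nonneg).2 fun i => by
    simp only [Pi.sup_apply, Real.dist_eq, sup_comm (x i)]
    exact (abs_sup_sub_sup_le_abs _ _ _).trans (dist_le_pi_dist a b i)

-- Makes the quotient by `ℝ ∙ 1` a T1 space, in which finite sets are discrete.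
instance isClosed_span_one :
    IsClosed ((ℝ ∙ (1 : ι → ℝ) : Submodule ℝ (ι → ℝ)) : Set (ι → ℝ)) :=
  Submodule.closed_of_finiteDimensional _

end FiniteDimension

theorem mkQ_span_one_eq_iff {ι : Type*} {p q : ι → ℝ} :
    (ℝ ∙ (1 : ι → ℝ)).mkQ q = (ℝ ∙ 1).mkQ p ↔ ∃ t : ℝ, q = p + fun _ => t := by
  simp only [Submodule.mkQ_apply, Submodule.Quotient.eq, Submodule.mem_span_singleton]
  refine exists_congr fun t => ?_
  rw [show (t • 1 : ι → ℝ) = fun _ => t from funext fun _ => mul_one t, eq_sub_iff_add_eq',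
    eq_comm]

namespace IsTopical

variable {ι : Type*} {F : (ι → ℝ) → ι → ℝ}

theorem sub_const (hF : IsTopical F) (c : ℝ) : IsTopical fun x => F x - fun _ => c where
  monotone _ _ h := sub_le_sub_right (hF.monotone h) _
  map_add_const x t := by rw [hF.map_add_const, add_sub_right_comm]

theorem map_le_add_const_of_le (hF : IsTopical F) {x y : ι → ℝ} {c : ℝ}
    (h : x ≤ y + fun _ => c) : F x ≤ F y + fun _ => c :=
  hF.map_add_const y c ▸ hF.monotone h

theorem isFixedPt_add_const (hF : IsTopical F) {y : ι → ℝ} (hy : IsFixedPt F y) (c : ℝ) :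
    IsFixedPt F (y + fun _ => c) := by
  rw [IsFixedPt, hF.map_add_const, hy.eq]

variable [Fintype ι]

theorem lipschitzWith_one (hF : IsTopical F) : LipschitzWith 1 F :=
  LipschitzWith.of_dist_le_mul fun x y => by
    rw [NNReal.coe_one, one_mul, dist_pi_le_iff dist_nonneg]
    intro i
    have hxy := hF.map_le_add_const_of_le (le_add_const_dist x y) i
    have hyx := hF.map_le_add_const_of_le (le_add_const_dist y x) i
    rw [dist_comm y x] at hyx
    simp only [Pi.add_apply] at hxy hyx
    rw [Real.dist_eq, abs_sub_le_iff]
    constructor <;> linarith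

section Path

variable (hF : IsTopical F) {x y : ι → ℝ} (hx : IsFixedPt F x) (hy : IsFixedPt F y)
include hF hx hy

theorem tendsto_iterate_sup (s : ℝ) :
    Tendsto (fun k => F^[k] (x ⊔ (y + fun _ => s))) atTop
      (𝓝 (⨆ k, F^[k] (x ⊔ (y + fun _ => s)))) := by
  have hyd := hF.isFixedPt_add_const hy (max s (dist x y))
  refine hF.monotone.tendsto_iterate_ciSup ?_ ?_ hyd
  · exact sup_le (hx.eq.ge.trans (hF.monotone le_sup_left))
      ((hF.isFixedPt_add_const hy s).eq.ge.trans (hF.monotone le_sup_right))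
  · refine sup_le ((le_add_const_dist x y).trans fun i => ?_) fun i => ?_ <;>
      simp only [Pi.add_apply, add_le_add_iff_left, le_max_left, le_max_right]

theorem isFixedPt_iSup_iterate_sup (s : ℝ) :
    IsFixedPt F (⨆ k, F^[k] (x ⊔ (y + fun _ => s))) :=
  isFixedPt_of_tendsto_iterate (hF.tendsto_iterate_sup hx hy s)
    hF.lipschitzWith_one.continuous.continuousAt

theorem lipschitzWith_iSup_iterate_sup :
    LipschitzWith 1 fun s : ℝ => ⨆ k, F^[k] (x ⊔ (y + fun _ => s)) :=
  LipschitzWith.of_dist_le_mul fun s t => by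
    rw [NNReal.coe_one, one_mul]
    refine le_of_tendsto ((hF.tendsto_iterate_sup hx hy s).dist (hF.tendsto_iterate_sup hx hy t))
      (Eventually.of_forall fun k => ?_)
    calc dist (F^[k] (x ⊔ (y + fun _ => s))) (F^[k] (x ⊔ (y + fun _ => t)))
        ≤ dist (x ⊔ (y + fun _ => s)) (x ⊔ (y + fun _ => t)) := by
          simpa using (hF.lipschitzWith_one.iterate k).dist_le_mul _ _
      _ ≤ dist (fun _ : ι => s) (fun _ => t) :=
          (dist_sup_sup_le _ _ _).trans_eq (dist_add_left y _ _)
      _ ≤ dist s t := dist_pi_const_le (β := ι) s t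

end Path

theorem subsingleton_mkQ_image_fixedPoints (hF : IsTopical F)
    (hfin : ((ℝ ∙ (1 : ι → ℝ)).mkQ '' fixedPoints F).Finite) :
    ((ℝ ∙ (1 : ι → ℝ)).mkQ '' fixedPoints F).Subsingleton := by
  rintro _ ⟨x, hx, rfl⟩ _ ⟨y, hy, rfl⟩
  set d := dist x y
  have hpath := isPreconnected_univ.constant_of_mapsTo hfin.isDiscrete
    ((Submodule.continuous_mkQ _).comp
      (hF.lipschitzWith_iSup_iterate_sup hx hy).continuous).continuousOn
    (fun s _ => mem_image_of_mem _ (hF.isFixedPt_iSup_iterate_sup hx hy s))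
    (mem_univ (-d)) (mem_univ d)
  have hstart : x ⊔ (y + fun _ => -d) = x := sup_eq_left.2 fun i => by
    have := le_add_const_dist y x i
    simp only [Pi.add_apply, dist_comm y x] at this ⊢
    linarith
  have hend : x ⊔ (y + fun _ => d) = y + fun _ => d := sup_eq_right.2 (le_add_const_dist x y)
  simp only [comp_apply, hstart, hend, iterate_fixed hx,
    iterate_fixed (hF.isFixedPt_add_const hy d), ciSup_const] at hpath
  exact hpath.trans (mkQ_span_one_eq_iff.2 ⟨d, rfl⟩)

theorem subsingleton_mkQ_image_eigenvectors (hF : IsTopical F) (lam : ℝ)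
    (hfin : ((ℝ ∙ (1 : ι → ℝ)).mkQ '' {x | F x = (fun _ => lam) + x}).Finite) :
    ((ℝ ∙ (1 : ι → ℝ)).mkQ '' {x | F x = (fun _ => lam) + x}).Subsingleton := by
  have hE : {x | F x = (fun _ => lam) + x} = fixedPoints fun x => F x - fun _ => lam :=
    ext fun _ => sub_eq_iff_eq_add'.symm
  rw [hE] at hfin ⊢
  exact (hF.sub_const lam).subsingleton_mkQ_image_fixedPoints hfin

end IsTopical

theorem finite_mkQ_image_of_subset_iUnion {ι κ : Type*} [Finite κ] {E : Set (ι → ℝ)}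
    (v : κ → ι → ℝ) (hE : E ⊆ ⋃ k, {y | ∃ t : ℝ, y = v k + fun _ => t}) :
    ((ℝ ∙ (1 : ι → ℝ)).mkQ '' E).Finite := by
  refine (finite_range ((ℝ ∙ (1 : ι → ℝ)).mkQ ∘ v)).subset ?_
  rintro _ ⟨x, hx, rfl⟩
  obtain ⟨k, t, rfl⟩ := mem_iUnion.1 (hE hx)
  exact ⟨k, (mkQ_span_one_eq_iff.2 ⟨t, rfl⟩).symm⟩

theorem stmt8_general {n : ℕ} (T : (Fin n → ℝ) → (Fin n → ℝ))
    (hmono : ∀ x y : Fin n → ℝ, x ≤ y → T x ≤ T y)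
    (hhom : ∀ (x : Fin n → ℝ) (c : ℝ), T (x + fun _ => c) = T x + fun _ => c)
    (lam : ℝ)
    (hne : {x : Fin n → ℝ | T x = (fun _ => lam) + x}.Nonempty)
    (N : ℕ) (v : Fin N → Fin n → ℝ)
    (hsub : {x : Fin n → ℝ | T x = (fun _ => lam) + x} ⊆
      ⋃ k : Fin N, {y : Fin n → ℝ | ∃ t : ℝ, y = v k + fun _ => t}) :
    ∃ u : Fin n → ℝ, {x : Fin n → ℝ | T x = (fun _ => lam) + x} =
      {y : Fin n → ℝ | ∃ t : ℝ, y = u + fun _ => t} := by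
  have hT : IsTopical T := ⟨fun x y h => hmono x y h, hhom⟩
  have hsingle :=
    hT.subsingleton_mkQ_image_eigenvectors lam (finite_mkQ_image_of_subset_iUnion v hsub)
  obtain ⟨x, hx⟩ := hne
  refine ⟨x, ext fun q =>
    ⟨fun hq => mkQ_span_one_eq_iff.1 (hsingle ⟨q, hq, rfl⟩ ⟨x, hx, rfl⟩), ?_⟩⟩
  rintro ⟨t, rfl⟩
  show T (x + _) = _
  rw [hhom, hx, add_assoc]

/-- if the eigenspace of a monotone additively homogeneous map is nonempty
and is contained in a finite union of lines of direction `e`, then it equals exactly one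
such line, i.e., the eigenvector is unique up to an additive constant. -/
theorem stmt8 {n : ℕ} (hn : 0 < n) (T : (Fin n → ℝ) → (Fin n → ℝ))
    (hmono : ∀ x y : Fin n → ℝ, x ≤ y → T x ≤ T y)
    (hhom : ∀ (x : Fin n → ℝ) (c : ℝ), T (x + fun _ => c) = T x + fun _ => c)
    (lam : ℝ)
    (hne : {x : Fin n → ℝ | T x = (fun _ => lam) + x}.Nonempty)
    (N : ℕ) (v : Fin N → Fin n → ℝ)
    (hsub : {x : Fin n → ℝ | T x = (fun _ => lam) + x} ⊆
      ⋃ k : Fin N, {y : Fin n → ℝ | ∃ t : ℝ, y = v k + fun _ => t}) :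
    ∃ u : Fin n → ℝ, {x : Fin n → ℝ | T x = (fun _ => lam) + x} =
      {y : Fin n → ℝ | ∃ t : ℝ, y = u + fun _ => t} :=
  stmt8_general T hmono hhom lam hne N v hsub
end

section
/- Let T : ℝⁿ → ℝⁿ be a perfect-information finite Shapley operator and suppose u, ν ∈ ℝⁿ satisfy T(u + αν) = u + (α+1)ν for all α ≥ 0. Then for every M > ‖u‖_H (the Hilbert seminorm of u), the eigenvalue of T ∘ R_M equals the upper mean payoff of T: whenever T(R_M(w)) = λe + w for some w ∈ ℝⁿ and λ ∈ ℝ, one has λ = max_{1≤i≤n} ν_i; moreover such a pair (λ, w) exists. -/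
/-- Perfect-information finite Shapley operator. -/
noncomputable def shapleyOp {n : ℕ} (A : Fin n → Type) [∀ i, Fintype (A i)] [∀ i, Nonempty (A i)]
    (B : ∀ i, A i → Type) [∀ i a, Fintype (B i a)] [∀ i a, Nonempty (B i a)]
    (r : ∀ i, ∀ a : A i, B i a → ℝ) (P : ∀ i, ∀ a : A i, B i a → Fin n → ℝ) :
    (Fin n → ℝ) → (Fin n → ℝ) :=
  fun x i => ⨅ a : A i, ⨆ b : B i a, (r i a b + ∑ j, P i a b j * x j)

/-- The map `R_M`, `(R_M x)_i = max( x_i, max_j (−M + x_j) )`. -/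
noncomputable def RM {n : ℕ} (M : ℝ) (x : Fin n → ℝ) : Fin n → ℝ :=
  fun i => max (x i) (⨆ j, (-M + x j))

/-!
Both `T` and `R_M` are monotone and commute with adding constants, hence so is `g = T ∘ R_M`.
For such a map, `λ + w ≤ g w` and `g u ≤ μ + u` force `λ ≤ μ` (compare `w` with the smallest
translate of `u` above it at a coordinate where they touch), and a sub-eigenvector below a
super-eigenvector with the same value `μ` yields an eigenvector by Knaster–Tarski. With
`μ = max_i ν_i`: since `M > ‖u‖_H`, `R_M` fixes `u`, so `g u = u + ν ≤ μ + u`; and for large `α`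
the coordinates where `ν_i < μ` are lifted by `R_M` so far that `u + αν − αμ` is a
sub-eigenvector.
-/

open Function Filter

theorem exists_isFixedPt_of_le_map_of_map_le {α : Type*} [ConditionallyCompleteLattice α]
    {f : α → α} (hf : Monotone f) {a b : α} (hab : a ≤ b) (ha : a ≤ f a) (hb : f b ≤ b) :
    ∃ c, IsFixedPt f c := by
  have : Fact (a ≤ b) := ⟨hab⟩
  let F : Set.Icc a b →o Set.Icc a b :=
    ⟨fun z => ⟨f z, ha.trans (hf z.2.1), (hf z.2.2).trans hb⟩, fun _ _ h => hf h⟩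
  exact ⟨F.lfp, congrArg Subtype.val F.map_lfp⟩

def AddHomogeneous {ι : Type*} (g : (ι → ℝ) → ι → ℝ) : Prop :=
  ∀ x c, g (x + const ι c) = g x + const ι c

section AddHomogeneous

variable {ι : Type*} {g h : (ι → ℝ) → ι → ℝ}

theorem AddHomogeneous.comp (hg : AddHomogeneous g) (hh : AddHomogeneous h) :
    AddHomogeneous (g ∘ h) := fun x c => by
  simp only [comp_apply, hh x c, hg (h x) c]

theorem le_of_const_add_le_of_le_const_add [Finite ι] [Nonempty ι] (hg : Monotone g)
    (hgc : AddHomogeneous g) {w u : ι → ℝ} {lam mu : ℝ} (hw : const ι lam + w ≤ g w)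
    (hu : g u ≤ const ι mu + u) : lam ≤ mu := by
  obtain ⟨i, hi⟩ := Finite.exists_max fun j => w j - u j
  have hwu : w ≤ u + const ι (w i - u i) := fun j => by
    simp only [Pi.add_apply, const_apply]
    linarith [hi j]
  have := (hw.trans (hg hwu)).trans ((hgc u _).le.trans (add_le_add_left hu _)) i
  simp only [Pi.add_apply, const_apply] at this
  linarith

theorem exists_map_eq_const_add (hg : Monotone g) {x u : ι → ℝ} {mu : ℝ} (hxu : x ≤ u)
    (hx : const ι mu + x ≤ g x) (hu : g u ≤ const ι mu + u) : ∃ w, g w = const ι mu + w := by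
  have hshift : Monotone fun z => g z - const ι mu := fun _ _ h => sub_le_sub_right (hg h) _
  obtain ⟨w, hw⟩ := exists_isFixedPt_of_le_map_of_map_le hshift hxu
    (le_sub_iff_add_le'.2 hx) (sub_le_iff_le_add'.2 hu)
  exact ⟨w, sub_eq_iff_eq_add'.1 hw.eq⟩

end AddHomogeneous

section Shapley

variable {n : ℕ} (A : Fin n → Type) [∀ i, Fintype (A i)] [∀ i, Nonempty (A i)]
    (B : ∀ i, A i → Type) [∀ i a, Fintype (B i a)] [∀ i a, Nonempty (B i a)]
    (r : ∀ i, ∀ a : A i, B i a → ℝ) {P : ∀ i, ∀ a : A i, B i a → Fin n → ℝ}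

theorem shapleyOp_monotone (hP : ∀ i a b, ∀ j, 0 ≤ P i a b j) :
    Monotone (shapleyOp A B r P) := fun _ _ hxy i =>
  ciInf_mono (Finite.bddBelow_range _) fun a => ciSup_mono (Finite.bddAbove_range _) fun b =>
    add_le_add_right
      (Finset.sum_le_sum fun j _ => mul_le_mul_of_nonneg_left (hxy j) (hP i a b j)) _

theorem shapleyOp_addHomogeneous (hP : ∀ i a b, ∑ j, P i a b j = 1) :
    AddHomogeneous (shapleyOp A B r P) := fun x c => by
  funext i
  have hterm : ∀ a b, r i a b + ∑ j, P i a b j * (x j + c)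
      = r i a b + ∑ j, P i a b j * x j + c := fun a b => by
    simp only [mul_add, Finset.sum_add_distrib, ← Finset.sum_mul, hP i a b, one_mul, add_assoc]
  simp only [shapleyOp, Pi.add_apply, const_apply, hterm, ciInf_add (Finite.bddBelow_range _),
    ciSup_add (Finite.bddAbove_range _)]

end Shapley

section RM

variable {n : ℕ} (M : ℝ)

theorem RM_monotone : Monotone (RM (n := n) M) := fun _ _ hxy i =>
  max_le_max (hxy i) (ciSup_mono (Finite.bddAbove_range _) fun j => add_le_add_right (hxy j) _)

theorem RM_addHomogeneous [Nonempty (Fin n)] : AddHomogeneous (RM (n := n) M) := fun x c => by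
  funext i
  simp only [RM, Pi.add_apply, const_apply, ← add_assoc, ← ciSup_add (Finite.bddAbove_range _),
    max_add_add_right]

theorem RM_eq_self [Nonempty (Fin n)] {u : Fin n → ℝ} (hu : (⨆ i, u i) - (⨅ i, u i) ≤ M) :
    RM M u = u := funext fun i =>
  max_eq_left <| ciSup_le fun j => by
    linarith [le_ciSup (Finite.bddAbove_range u) j, ciInf_le (Finite.bddBelow_range u) i]

theorem eventually_le_RM_add_smul (u ν : Fin n → ℝ) {i₀ : Fin n} (hi₀ : ∀ i, ν i ≤ ν i₀) :
    ∀ᶠ α : ℝ in atTop, u + (α - 1) • ν + const (Fin n) (ν i₀) ≤ RM M (u + α • ν) := by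
  refine eventually_all.2 fun i => ?_
  rcases (hi₀ i).eq_or_lt with hi | hi
  · refine Eventually.of_forall fun α => le_max_of_le_left ?_
    simp only [Pi.add_apply, Pi.smul_apply, smul_eq_mul, const_apply, hi]
    linarith
  · filter_upwards [eventually_ge_atTop (1 + (M + u i - u i₀) / (ν i₀ - ν i))] with α hα
    have hgap : M + u i - u i₀ ≤ (α - 1) * (ν i₀ - ν i) :=
      (div_le_iff₀ (sub_pos.2 hi)).1 (by linarith)
    refine le_max_of_le_right (le_trans ?_ (le_ciSup (Finite.bddAbove_range _) i₀))
    simp only [Pi.add_apply, Pi.smul_apply, smul_eq_mul, const_apply]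
    nlinarith

end RM

theorem exists_le_const_add_le_map_RM {n : ℕ} [Nonempty (Fin n)] {T : (Fin n → ℝ) → Fin n → ℝ}
    (hT : Monotone T) (hTc : AddHomogeneous T) {u ν : Fin n → ℝ}
    (hhalf : ∀ α : ℝ, 0 ≤ α → T (u + α • ν) = u + (α + 1) • ν) (M : ℝ) {i₀ : Fin n}
    (hi₀ : ∀ i, ν i ≤ ν i₀) :
    ∃ x ≤ u, const (Fin n) (ν i₀) + x ≤ T (RM M x) := by
  obtain ⟨α, hα, hle⟩ :=
    ((eventually_ge_atTop (1 : ℝ)).and (eventually_le_RM_add_smul M u ν hi₀)).exists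
  set x := u + α • ν + const (Fin n) (-(α * ν i₀))
  refine ⟨x, fun i => ?_, fun i => ?_⟩
  · simp only [x, Pi.add_apply, Pi.smul_apply, smul_eq_mul, const_apply]
    nlinarith [hi₀ i]
  · have hlift := hT hle i
    rw [hTc, hhalf (α - 1) (by linarith), sub_add_cancel] at hlift
    rw [RM_addHomogeneous, hTc]
    simp only [x, Pi.add_apply, Pi.smul_apply, smul_eq_mul, const_apply] at hlift ⊢
    linarith

/-- if `T` has an invariant half-line `α ↦ u + αν` (for all `α ≥ 0`), then
for every `M` larger than the Hilbert seminorm of `u`, the operator `T ∘ R_M` has an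
eigenvalue, and this eigenvalue equals the upper mean payoff `max_i ν_i` of `T`. -/
theorem stmt11 {n : ℕ} (hn : 0 < n)
    (A : Fin n → Type) [∀ i, Fintype (A i)] [∀ i, Nonempty (A i)]
    (B : ∀ i, A i → Type) [∀ i a, Fintype (B i a)] [∀ i a, Nonempty (B i a)]
    (r : ∀ i, ∀ a : A i, B i a → ℝ) (P : ∀ i, ∀ a : A i, B i a → Fin n → ℝ)
    (hP : ∀ i a b, (∀ j, 0 ≤ P i a b j) ∧ ∑ j, P i a b j = 1)
    (T : (Fin n → ℝ) → (Fin n → ℝ)) (hT : T = shapleyOp A B r P)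
    (u ν : Fin n → ℝ)
    (hhalf : ∀ α : ℝ, 0 ≤ α → T (u + α • ν) = u + (α + 1) • ν)
    (M : ℝ) (hM : (⨆ i, u i) - (⨅ i, u i) < M) :
    (∃ (lam : ℝ) (w : Fin n → ℝ), T (RM M w) = (fun _ => lam) + w) ∧
    (∀ (lam : ℝ) (w : Fin n → ℝ), T (RM M w) = (fun _ => lam) + w →
      lam = ⨆ i, ν i) := by
  have : Nonempty (Fin n) := ⟨⟨0, hn⟩⟩
  subst hT
  have hTmono := shapleyOp_monotone A B r fun i a b => (hP i a b).1
  have hTc := shapleyOp_addHomogeneous A B r fun i a b => (hP i a b).2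
  have hg := hTmono.comp (RM_monotone M)
  have hgc := hTc.comp (RM_addHomogeneous M)
  obtain ⟨i₀, hi₀⟩ := exists_eq_ciSup_of_finite (f := ν)
  have hmax : ∀ i, ν i ≤ ν i₀ := hi₀ ▸ le_ciSup (Finite.bddAbove_range ν)
  have hsuper : shapleyOp A B r P (RM M u) ≤ const (Fin n) (ν i₀) + u := by
    have hTu := hhalf 0 le_rfl
    rw [zero_smul, add_zero, zero_add, one_smul] at hTu
    rw [RM_eq_self M hM.le, hTu, add_comm]
    exact add_le_add_left hmax u
  obtain ⟨x, hxu, hsub⟩ := exists_le_const_add_le_map_RM hTmono hTc hhalf M hmax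
  refine ⟨⟨ν i₀, exists_map_eq_const_add hg hxu hsub hsuper⟩, fun lam w hw => ?_⟩
  rw [← hi₀]
  exact le_antisymm (le_of_const_add_le_of_le_const_add hg hgc hw.ge hsuper)
    (le_of_const_add_le_of_le_const_add hg hgc hsub hw.le)
end
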